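/- Let M be an n-state, k-action DMDP and let π_1 ≺ π_2 ≺ … ≺ π_ℓ be a sequence of policies in which each π_{i+1} is obtained from π_i by policy improvement with max-gain action selection. Then ℓ ≤ (n+1)·N_2(G_M), where N_2(G_M) is the number of path-cycle subgraphs of the skeleton of the DMDP digraph G_M. -/

import Mathlib

open scoped Classical
open Finset

/-- Number of directed cycles in a finite directed multigraph on `Fin n`
specified by the edge-multiplicity function `G`: self-loops are cycles of
length 1, cycles of length `≥ 2` correspond to cyclic permutations, parallel
edges give distinct cycles, and cycles are counted up to cyclic rotation. -/
noncomputable def cycleCount (n : ℕ) (G : Fin n → Fin n → ℕ) : ℕ :=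
  (∑ v, G v v) +
  ∑ σ : Equiv.Perm (Fin n), if σ.IsCycle then ∏ v ∈ σ.support, G v (σ v) else 0

/-- Number of path-cycle subgraphs of a finite directed multigraph with
multiplicity function `G`: a path-cycle subgraph is given by a nonempty
vertex set `s` together with a successor map `f` on `s` (extended by the
identity off `s`) whose functional digraph on `s` is weakly connected and
has at most one source (vertex of indegree zero); parallel edges give
distinct path-cycles. -/
noncomputable def pathCycleCount {V : Type*} [Fintype V] [DecidableEq V]
    (G : V → V → ℕ) : ℕ :=
  ∑ s : Finset V, ∑ f : V → V,
    if s.Nonempty ∧ (∀ v, v ∉ s → f v = v) ∧ (∀ v ∈ s, f v ∈ s) ∧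
        (∀ u ∈ s, ∀ v ∈ s,
          Relation.ReflTransGen (fun a b => (a ∈ s ∧ f a = b) ∨ (b ∈ s ∧ f b = a)) u v) ∧
        (s.filter fun v => ∀ u ∈ s, f u ≠ v).card ≤ 1
    then ∏ v ∈ s, G v (f v) else 0

/-- `α(k) = (k - 1 + √((k-1)² + 4)) / 2`. -/
noncomputable def alphaK (k : ℕ) : ℝ :=
  ((k : ℝ) - 1 + Real.sqrt (((k : ℝ) - 1) ^ 2 + 4)) / 2

/-- Multiplicity function of the digraph `G_{n,k}`: on vertices `Fin n`,
edges `(i, i+1 mod n)` have multiplicity `k - 1` and edges `(i, i+2 mod n)`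
have multiplicity `1`. -/
def GnkMult (n k : ℕ) : Fin n → Fin n → ℕ := fun i j =>
  if (j.val + n - i.val) % n = 1 then k - 1
  else if (j.val + n - i.val) % n = 2 then 1
  else 0

/-- Multiplicity function of the digraph `G'_{n,k}`: on vertices `Fin n`,
edges `(i, i+1 mod n)` have multiplicity `1` and edges `(i, i+2 mod n)`
have multiplicity `k - 1`. -/
def Gnk'Mult (n k : ℕ) : Fin n → Fin n → ℕ := fun i j =>
  if (j.val + n - i.val) % n = 1 then 1
  else if (j.val + n - i.val) % n = 2 then k - 1
  else 0

/-- Edge relation of the simple digraph `G_m`: `(i, j)` is an edge whenever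
`j - i ≡ 1 (mod m)` or `j - i ≡ 2 (mod m)`. -/
def GmRel (m : ℕ) : Fin m → Fin m → Prop := fun i j =>
  (j.val + m - i.val) % m = 1 ∨ (j.val + m - i.val) % m = 2

/-- The sequence `S_m` with `S_0 = 1`, `S_1 = k - 1`,
`S_m = (k-1) S_{m-1} + S_{m-2}`. -/
def Sseq (k : ℕ) : ℕ → ℕ
  | 0 => 1
  | 1 => k - 1
  | (m + 2) => (k - 1) * Sseq k (m + 1) + Sseq k m

/-- `F_k(n)`: the maximum number of directed cycles over all digraphs on `n`
vertices with every outdegree exactly `k` in which every multi-edge between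
distinct vertices has multiplicity at most `k - 1`. -/
noncomputable def Fk (k n : ℕ) : ℕ :=
  sSup {c : ℕ | ∃ G : Fin n → Fin n → ℕ,
    (∀ v, (∑ u, G v u) = k) ∧ (∀ u v : Fin n, u ≠ v → G u v ≤ k - 1) ∧
    c = cycleCount n G}

/-- Weak connectivity (same connected component) in a directed multigraph. -/
def MConn {n : ℕ} (G : Fin n → Fin n → ℕ) : Fin n → Fin n → Prop :=
  Relation.ReflTransGen (fun a b => 0 < G a b ∨ 0 < G b a)

/-- A deterministic Markov decision problem with state space `S`, action
space `A` (all actions available at every state), deterministic transition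
function `T`, reward function `R` and discount factor `gamma ∈ [0, 1)`. -/
structure DMDP (S A : Type*) where
  T : S → A → S
  R : S → A → ℝ
  gamma : ℝ
  gamma_nonneg : 0 ≤ gamma
  gamma_lt_one : gamma < 1

namespace DMDP

variable {S A : Type*}

/-- The trajectory of states obtained by following policy `π` from `s`. -/
def traj (M : DMDP S A) (π : S → A) (s : S) (t : ℕ) : S :=
  (fun x => M.T x (π x))^[t] s

/-- The value function `V^π(s) = Σ_t γ^t R(s_t, π(s_t))`. -/
noncomputable def V (M : DMDP S A) (π : S → A) (s : S) : ℝ :=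
  ∑' t : ℕ, M.gamma ^ t * M.R (M.traj π s t) (π (M.traj π s t))

/-- The action value function `Q^π(s, a) = R(s, a) + γ V^π(T(s, a))`. -/
noncomputable def Q (M : DMDP S A) (π : S → A) (s : S) (a : A) : ℝ :=
  M.R s a + M.gamma * M.V π (M.T s a)

/-- `π ≺ π'`: pointwise `V^π ≤ V^{π'}` with strict inequality somewhere. -/
def PLt (M : DMDP S A) (π π' : S → A) : Prop :=
  (∀ s, M.V π s ≤ M.V π' s) ∧ ∃ s, M.V π s < M.V π' s

/-- `π'` is obtained from `π` by policy improvement with arbitrary action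
selection. -/
def ImpStep (M : DMDP S A) (π π' : S → A) : Prop :=
  π' ≠ π ∧ ∀ s, π' s ≠ π s → M.V π s < M.Q π s (π' s)

/-- `π'` is obtained from `π` by policy improvement with max-gain action
selection. -/
def MaxGainStep (M : DMDP S A) (π π' : S → A) : Prop :=
  π' ≠ π ∧ ∀ s, π' s ≠ π s →
    M.V π s < M.Q π s (π' s) ∧
    ∀ a, M.V π s < M.Q π s a → M.Q π s a ≤ M.Q π s (π' s)

/-- The first time step at which a previously visited state recurs on the
trajectory of `π` from `s`. -/
noncomputable def pcLen (M : DMDP S A) (π : S → A) (s : S) : ℕ :=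
  sInf {t : ℕ | ∃ t' < t, M.traj π s t' = M.traj π s t}

/-- The path-cycle `P^π_s`: the sequence of state–action–state triples
`(s_t, π(s_t), s_{t+1})` for `t` up to (but excluding) the first recurrence
of a previously visited state. -/
noncomputable def pathCycle (M : DMDP S A) (π : S → A) (s : S) : List (S × A × S) :=
  (List.range (M.pcLen π s)).map fun t =>
    (M.traj π s t, π (M.traj π s t), M.traj π s (t + 1))

/-- The multiplicity function of the DMDP digraph `G_M`: one edge from `s`
to `T(s, a)` for every action `a`. -/
noncomputable def digraph (M : DMDP S A) [Fintype A] : S → S → ℕ :=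
  fun s s' => (Finset.univ.filter fun a => M.T s a = s').card

/-- A state is non-branching if all actions lead to the same next state. -/
def NonBranching (M : DMDP S A) (s : S) : Prop := ∃ s', ∀ a, M.T s a = s'

/-- The relation `∼` on path-cycles: same sequence of states, and wherever
the actions differ the state is non-branching. -/
def PCSim (M : DMDP S A) (P₁ P₂ : List (S × A × S)) : Prop :=
  P₁.length = P₂.length ∧
  ∀ (t : ℕ) (h₁ : t < P₁.length) (h₂ : t < P₂.length),
    (P₁.get ⟨t, h₁⟩).1 = (P₂.get ⟨t, h₂⟩).1 ∧
    (P₁.get ⟨t, h₁⟩).2.2 = (P₂.get ⟨t, h₂⟩).2.2 ∧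
    ((P₁.get ⟨t, h₁⟩).2.1 ≠ (P₂.get ⟨t, h₂⟩).2.1 → M.NonBranching (P₁.get ⟨t, h₁⟩).1)

/-- The relation `≈` on path-cycles: they differ only in equivalent edges,
i.e. have the same sequences of source and target states. -/
def PCApprox (_M : DMDP S A) (P₁ P₂ : List (S × A × S)) : Prop :=
  P₁.length = P₂.length ∧
  ∀ (t : ℕ) (h₁ : t < P₁.length) (h₂ : t < P₂.length),
    (P₁.get ⟨t, h₁⟩).1 = (P₂.get ⟨t, h₂⟩).1 ∧
    (P₁.get ⟨t, h₁⟩).2.2 = (P₂.get ⟨t, h₂⟩).2.2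

end DMDP

section PIAux

variable {S A : Type*} [Fintype S] [Nonempty S] [Fintype A] [Nonempty A]

private lemma traj_zero (M : DMDP S A) (π : S → A) (s : S) : M.traj π s 0 = s := rfl

private lemma traj_succ' (M : DMDP S A) (π : S → A) (s : S) (t : ℕ) :
    M.traj π s (t + 1) = M.T (M.traj π s t) (π (M.traj π s t)) :=
  Function.iterate_succ_apply' _ t s

private lemma traj_succ (M : DMDP S A) (π : S → A) (s : S) (t : ℕ) :
    M.traj π s (t + 1) = M.traj π (M.T s (π s)) t :=
  Function.iterate_succ_apply _ t s

private lemma summable_V (M : DMDP S A) (π : S → A) (s : S) :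
    Summable fun t : ℕ => M.gamma ^ t * M.R (M.traj π s t) (π (M.traj π s t)) := by
  obtain ⟨B, hB⟩ : ∃ B : ℝ, ∀ x : S, |M.R x (π x)| ≤ B :=
    ⟨Finset.univ.sup' Finset.univ_nonempty (fun x : S => |M.R x (π x)|),
      fun x => Finset.le_sup' (fun x : S => |M.R x (π x)|) (Finset.mem_univ x)⟩
  refine Summable.of_norm_bounded
    ((summable_geometric_of_lt_one M.gamma_nonneg M.gamma_lt_one).mul_left B) fun t => ?_
  rw [Real.norm_eq_abs, abs_mul, abs_pow, abs_of_nonneg M.gamma_nonneg, mul_comm]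
  exact mul_le_mul_of_nonneg_right (hB _) (pow_nonneg M.gamma_nonneg t)

private lemma V_bellman (M : DMDP S A) (π : S → A) (s : S) :
    M.V π s = M.R s (π s) + M.gamma * M.V π (M.T s (π s)) := by
  have h := summable_V M π s
  have h0 : M.V π s = M.gamma ^ 0 * M.R (M.traj π s 0) (π (M.traj π s 0)) +
      ∑' t : ℕ, M.gamma ^ (t + 1) * M.R (M.traj π s (t + 1)) (π (M.traj π s (t + 1))) :=
    Summable.tsum_eq_zero_add h
  have h1 : ∀ t : ℕ, M.gamma ^ (t + 1) * M.R (M.traj π s (t + 1)) (π (M.traj π s (t + 1)))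
      = M.gamma * (M.gamma ^ t * M.R (M.traj π (M.T s (π s)) t) (π (M.traj π (M.T s (π s)) t))) := by
    intro t
    rw [traj_succ, pow_succ']
    ring
  rw [h0, tsum_congr h1, tsum_mul_left, traj_zero, pow_zero, one_mul]
  rfl

private lemma V_congr (M : DMDP S A) (π π' : S → A) (E : Finset S)
    (hT : ∀ x ∈ E, M.T x (π x) = M.T x (π' x))
    (hR : ∀ x ∈ E, M.R x (π x) = M.R x (π' x))
    (hcl : ∀ x ∈ E, M.T x (π x) ∈ E) {s : S} (hs : s ∈ E) :
    M.V π s = M.V π' s := by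
  have key : ∀ t, M.traj π s t = M.traj π' s t ∧ M.traj π s t ∈ E := by
    intro t
    induction t with
    | zero => exact ⟨rfl, hs⟩
    | succ t ih =>
      refine ⟨?_, ?_⟩
      · rw [traj_succ', traj_succ', ← ih.1, hT _ ih.2]
      · rw [traj_succ']
        exact hcl _ ih.2
  rw [DMDP.V, DMDP.V]
  refine tsum_congr fun t => ?_
  rw [← (key t).1, hR _ (key t).2]

private lemma V_mono_chain (M : DMDP S A) {ℓ : ℕ} {π : ℕ → S → A}
    (hchain : ∀ i, i + 1 < ℓ → M.PLt (π i) (π (i + 1))) :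
    ∀ j, j < ℓ → ∀ i, i ≤ j → ∀ s, M.V (π i) s ≤ M.V (π j) s := by
  intro j
  induction j with
  | zero =>
    intro _ i hi s
    obtain rfl := Nat.le_zero.mp hi
    exact le_rfl
  | succ j ih =>
    intro hj i hi s
    rcases eq_or_lt_of_le hi with rfl | h
    · exact le_rfl
    · exact (ih (by omega) i (by omega) s).trans ((hchain j (by omega)).1 s)

private lemma Q_le (M : DMDP S A) (π π' : S → A)
    (hmono : ∀ s, M.V π s ≤ M.V π' s) (s : S) :
    M.Q π s (π' s) ≤ M.V π' s := by
  rw [DMDP.Q, V_bellman M π' s]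
  have h := hmono (M.T s (π' s))
  have hg := M.gamma_nonneg
  nlinarith

private lemma last_switch {π : ℕ → S → A} {u : S} :
    ∀ t, (∃ r, r < t ∧ π (r + 1) u ≠ π r u) →
      ∃ r, r < t ∧ π (r + 1) u ≠ π r u ∧ π t u = π (r + 1) u := by
  intro t
  induction t with
  | zero =>
    rintro ⟨r, hr, -⟩
    omega
  | succ t ih =>
    rintro ⟨r, hr, hne⟩
    by_cases h : π (t + 1) u = π t u
    · have hrt : r < t := by
        rcases Nat.lt_succ_iff_lt_or_eq.mp hr with h' | rfl
        · exact h'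
        · exact absurd h hne
      obtain ⟨r', hr', hne', heq⟩ := ih ⟨r, hrt, hne⟩
      exact ⟨r', by omega, hne', by rw [h, heq]⟩
    · exact ⟨t, by omega, h, rfl⟩

private lemma canonical (M : DMDP S A) {ℓ : ℕ} {π : ℕ → S → A}
    (hstep : ∀ i, i + 1 < ℓ → M.MaxGainStep (π i) (π (i + 1)))
    {t : ℕ} (ht : t < ℓ) {u : S} (hu : ∃ r, r < t ∧ π (r + 1) u ≠ π r u)
    {a : A} (ha : M.T u a = M.T u (π t u)) : M.R u a ≤ M.R u (π t u) := by
  obtain ⟨r, hrt, hne, heq⟩ := last_switch t hu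
  have hstepr := (hstep r (by omega)).2 u hne
  rw [heq] at ha ⊢
  by_contra hgt
  push_neg at hgt
  have e1 : M.Q (π r) u a = M.R u a + M.gamma * M.V (π r) (M.T u (π (r + 1) u)) := by
    rw [DMDP.Q, ha]
  have e2 : M.Q (π r) u (π (r + 1) u)
      = M.R u (π (r + 1) u) + M.gamma * M.V (π r) (M.T u (π (r + 1) u)) := rfl
  have h2 : M.V (π r) u < M.Q (π r) u a := by
    have := hstepr.1
    rw [e2] at this
    rw [e1]
    linarith
  have h3 := hstepr.2 a h2
  rw [e1, e2] at h3
  linarith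

private lemma repeat_exists (M : DMDP S A) (ρ : S → A) (s : S) :
    ∃ m, 0 < m ∧ ∃ r, r < m ∧ M.traj ρ s r = M.traj ρ s m := by
  obtain ⟨x, y, hxy, he⟩ := Finite.exists_ne_map_eq_of_infinite (M.traj ρ s)
  rcases hxy.lt_or_gt with h | h
  · exact ⟨y, by omega, x, h, he⟩
  · exact ⟨x, by omega, y, h, he.symm⟩

private noncomputable def pcm (M : DMDP S A) (ρ : S → A) (s : S) : ℕ :=
  (repeat_exists M ρ s).choose

private lemma pcm_pos (M : DMDP S A) (ρ : S → A) (s : S) : 0 < pcm M ρ s :=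
  (repeat_exists M ρ s).choose_spec.1

private lemma pcm_spec (M : DMDP S A) (ρ : S → A) (s : S) :
    ∃ r, r < pcm M ρ s ∧ M.traj ρ s r = M.traj ρ s (pcm M ρ s) :=
  (repeat_exists M ρ s).choose_spec.2

private noncomputable def pcset (M : DMDP S A) (ρ : S → A) (s : S) : Finset S :=
  (Finset.range (pcm M ρ s)).image (M.traj ρ s)

private noncomputable def pcf (M : DMDP S A) (ρ : S → A) (s : S) : S → S :=
  fun x => if x ∈ pcset M ρ s then M.T x (ρ x) else x

private lemma traj_mem_pcset (M : DMDP S A) (ρ : S → A) (s : S) {t : ℕ}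
    (ht : t < pcm M ρ s) : M.traj ρ s t ∈ pcset M ρ s :=
  Finset.mem_image.mpr ⟨t, Finset.mem_range.mpr ht, rfl⟩

private lemma start_mem_pcset (M : DMDP S A) (ρ : S → A) (s : S) : s ∈ pcset M ρ s :=
  traj_mem_pcset M ρ s (pcm_pos M ρ s)

private lemma pcf_eq (M : DMDP S A) (ρ : S → A) (s : S) {x : S} (hx : x ∈ pcset M ρ s) :
    pcf M ρ s x = M.T x (ρ x) := if_pos hx

private lemma pcf_ne (M : DMDP S A) (ρ : S → A) (s : S) {x : S} (hx : x ∉ pcset M ρ s) :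
    pcf M ρ s x = x := if_neg hx

private lemma pcset_closed (M : DMDP S A) (ρ : S → A) (s : S) {x : S}
    (hx : x ∈ pcset M ρ s) : M.T x (ρ x) ∈ pcset M ρ s := by
  obtain ⟨t, ht, rfl⟩ := Finset.mem_image.mp hx
  rw [Finset.mem_range] at ht
  rw [← traj_succ']
  by_cases h : t + 1 < pcm M ρ s
  · exact traj_mem_pcset M ρ s h
  · have ht1 : t + 1 = pcm M ρ s := by omega
    obtain ⟨r, hr, he⟩ := pcm_spec M ρ s
    rw [ht1, ← he]
    exact traj_mem_pcset M ρ s hr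

private lemma rtg_symm {α : Type*} {r : α → α → Prop} (hs : Symmetric r) :
    ∀ {a b : α}, Relation.ReflTransGen r a b → Relation.ReflTransGen r b a := by
  intro a b h
  induction h with
  | refl => exact Relation.ReflTransGen.refl
  | tail _ h2 ih => exact Relation.ReflTransGen.trans (Relation.ReflTransGen.single (hs h2)) ih

private lemma pc_from_start (M : DMDP S A) (ρ : S → A) (s : S) :
    ∀ t, t < pcm M ρ s → Relation.ReflTransGen
      (fun a b => (a ∈ pcset M ρ s ∧ pcf M ρ s a = b) ∨ (b ∈ pcset M ρ s ∧ pcf M ρ s b = a))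
      s (M.traj ρ s t) := by
  intro t
  induction t with
  | zero => intro _; exact Relation.ReflTransGen.refl
  | succ t ih =>
    intro ht
    have h1 : t < pcm M ρ s := by omega
    have hmem : M.traj ρ s t ∈ pcset M ρ s := traj_mem_pcset M ρ s h1
    refine (ih h1).tail (Or.inl ⟨hmem, ?_⟩)
    rw [pcf_eq M ρ s hmem, ← traj_succ']

private lemma pc_conn (M : DMDP S A) (ρ : S → A) (s : S) :
    ∀ u ∈ pcset M ρ s, ∀ v ∈ pcset M ρ s,
      Relation.ReflTransGen
        (fun a b => (a ∈ pcset M ρ s ∧ pcf M ρ s a = b) ∨ (b ∈ pcset M ρ s ∧ pcf M ρ s b = a))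
        u v := by
  have hsym : Symmetric fun a b =>
      (a ∈ pcset M ρ s ∧ pcf M ρ s a = b) ∨ (b ∈ pcset M ρ s ∧ pcf M ρ s b = a) :=
    fun a b h => Or.symm h
  intro u hu v hv
  obtain ⟨t, ht, rfl⟩ := Finset.mem_image.mp hu
  obtain ⟨t', ht', rfl⟩ := Finset.mem_image.mp hv
  rw [Finset.mem_range] at ht ht'
  exact (rtg_symm hsym (pc_from_start M ρ s t ht)).trans (pc_from_start M ρ s t' ht')

private lemma pc_sources (M : DMDP S A) (ρ : S → A) (s : S) :
    ((pcset M ρ s).filter fun v => ∀ u ∈ pcset M ρ s, pcf M ρ s u ≠ v).card ≤ 1 := by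
  have hsub : ((pcset M ρ s).filter fun v => ∀ u ∈ pcset M ρ s, pcf M ρ s u ≠ v) ⊆ {s} := by
    intro v hv
    rw [Finset.mem_filter] at hv
    obtain ⟨t, ht, rfl⟩ := Finset.mem_image.mp hv.1
    rw [Finset.mem_range] at ht
    rcases t with _ | t
    · exact Finset.mem_singleton.mpr rfl
    · exfalso
      have h1 : t < pcm M ρ s := by omega
      refine hv.2 (M.traj ρ s t) (traj_mem_pcset M ρ s h1) ?_
      rw [pcf_eq M ρ s (traj_mem_pcset M ρ s h1), ← traj_succ']
  exact (Finset.card_le_card hsub).trans (by simp)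

private lemma pc_prod (M : DMDP S A) (ρ : S → A) (s : S) :
    ∏ v ∈ pcset M ρ s, min (M.digraph v (pcf M ρ s v)) 1 = 1 := by
  refine Finset.prod_eq_one fun v hv => ?_
  rw [pcf_eq M ρ s hv]
  have hpos : 0 < M.digraph v (M.T v (ρ v)) := by
    simp only [DMDP.digraph]
    exact Finset.card_pos.mpr ⟨ρ v, Finset.mem_filter.mpr ⟨Finset.mem_univ _, rfl⟩⟩
  omega

private noncomputable def Dset (π : ℕ → S → A) (t : ℕ) : Finset S :=
  Finset.univ.filter fun u => ∃ r, r < t ∧ π (r + 1) u ≠ π r u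

private lemma mem_Dset {π : ℕ → S → A} {t : ℕ} {u : S} :
    u ∈ Dset π t ↔ ∃ r, r < t ∧ π (r + 1) u ≠ π r u := by
  simp [Dset]

private lemma Dset_mono {π : ℕ → S → A} {t t' : ℕ} (h : t ≤ t') : Dset π t ⊆ Dset π t' := by
  intro u hu
  obtain ⟨r, h1, h2⟩ := mem_Dset.mp hu
  exact mem_Dset.mpr ⟨r, by omega, h2⟩

private lemma no_switch_eq {π : ℕ → S → A} {u : S} :
    ∀ t, (∀ r, r < t → π (r + 1) u = π r u) → π t u = π 0 u := by
  intro t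
  induction t with
  | zero => intro _; rfl
  | succ t ih =>
    intro h
    rw [h t (by omega), ih (fun r hr => h r (by omega))]

end PIAux

theorem stmt_16 {S A : Type*} [Fintype S] [Nonempty S] [Fintype A] [Nonempty A]
    (M : DMDP S A) (n k : ℕ) (hn : Fintype.card S = n) (hk : Fintype.card A = k)
    (ℓ : ℕ) (π : ℕ → S → A)
    (hchain : ∀ i, i + 1 < ℓ → M.PLt (π i) (π (i + 1)))
    (hstep : ∀ i, i + 1 < ℓ → M.MaxGainStep (π i) (π (i + 1))) :
    ℓ ≤ (n + 1) * pathCycleCount (fun s s' : S => min (M.digraph s s') 1) := by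
  classical
  -- the finset of path-cycle subgraphs of the skeleton
  set PCs : Finset (Finset S × (S → S)) := Finset.univ.filter (fun p =>
    (p.1.Nonempty ∧ (∀ v, v ∉ p.1 → p.2 v = v) ∧ (∀ v ∈ p.1, p.2 v ∈ p.1) ∧
      (∀ u ∈ p.1, ∀ v ∈ p.1, Relation.ReflTransGen
        (fun a b => (a ∈ p.1 ∧ p.2 a = b) ∨ (b ∈ p.1 ∧ p.2 b = a)) u v) ∧
      (p.1.filter fun v => ∀ u ∈ p.1, p.2 u ≠ v).card ≤ 1) ∧
    ∏ v ∈ p.1, min (M.digraph v (p.2 v)) 1 = 1) with hPCs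
  have hgood : ∀ (ρ : S → A) (x : S),
      ((pcset M ρ x, pcf M ρ x) : Finset S × (S → S)) ∈ PCs := by
    intro ρ x
    refine Finset.mem_filter.mpr ⟨Finset.mem_univ _,
      ⟨⟨x, start_mem_pcset M ρ x⟩, fun v hv => pcf_ne M ρ x hv,
        fun v hv => by
          have hgoal : pcf M ρ x v ∈ pcset M ρ x := by
            rw [pcf_eq M ρ x hv]; exact pcset_closed M ρ x hv
          exact hgoal,
        pc_conn M ρ x, pc_sources M ρ x⟩, pc_prod M ρ x⟩
  -- PCs.card is at most the path-cycle count
  have hcount : PCs.card ≤ pathCycleCount (fun s s' : S => min (M.digraph s s') 1) := by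
    rw [hPCs, Finset.card_filter]
    simp only [pathCycleCount]
    rw [← Finset.univ_product_univ, Finset.sum_product]
    refine Finset.sum_le_sum fun a _ => Finset.sum_le_sum fun f _ => ?_
    split_ifs with h1 h2
    · exact le_of_eq h1.2.symm
    · exact absurd h1.1 h2
    · exact Nat.zero_le _
    · exact Nat.zero_le _
  have hPC1 : 1 ≤ PCs.card :=
    Finset.card_pos.mpr ⟨_, hgood (π 0) (Classical.arbitrary S)⟩
  -- choose a switched state at each step
  have hswc : ∀ i : ℕ, ∃ u : S, i + 1 < ℓ → π (i + 1) u ≠ π i u := by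
    intro i
    by_cases h : i + 1 < ℓ
    · obtain ⟨u, hu⟩ := Function.ne_iff.mp (hstep i h).1
      exact ⟨u, fun _ => hu⟩
    · exact ⟨Classical.arbitrary S, fun h' => absurd h' h⟩
  choose sw hswp using hswc
  -- the charging map
  set Φ : ℕ → (Finset S × (S → S)) × ℕ := fun i =>
    ((pcset M (π (i + 1)) (sw i), pcf M (π (i + 1)) (sw i)),
      (pcset M (π (i + 1)) (sw i) ∩ Dset π (i + 1)).card) with hΦ
  -- main distinctness lemma
  have main : ∀ i j, i < j → j + 1 < ℓ → Φ i ≠ Φ j := by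
    intro i j hij hj heq
    have hi : i + 1 < ℓ := by omega
    simp only [hΦ, Prod.mk.injEq] at heq
    obtain ⟨⟨hset, hfun⟩, hcnt⟩ := heq
    set E := pcset M (π (j + 1)) (sw j) with hE
    rw [hset] at hcnt
    have hDeq : E ∩ Dset π (i + 1) = E ∩ Dset π (j + 1) :=
      Finset.eq_of_subset_of_card_le
        (Finset.inter_subset_inter (Finset.Subset.refl _) (Dset_mono (by omega)))
        (le_of_eq hcnt.symm)
    -- transitions agree on E
    have hTagree : ∀ u ∈ E, M.T u (π (i + 1) u) = M.T u (π (j + 1) u) := by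
      intro u hu
      have hu' : u ∈ pcset M (π (i + 1)) (sw i) := by rw [hset]; exact hu
      have h1 := pcf_eq M (π (i + 1)) (sw i) hu'
      have h2 := pcf_eq M (π (j + 1)) (sw j) hu
      rw [← h1, ← h2, hfun]
    -- rewards agree on E
    have hRagree : ∀ u ∈ E, M.R u (π (i + 1) u) = M.R u (π (j + 1) u) := by
      intro u hu
      by_cases hu2 : u ∈ Dset π (j + 1)
      · have hui : u ∈ Dset π (i + 1) := by
          have hmem : u ∈ E ∩ Dset π (j + 1) := Finset.mem_inter.mpr ⟨hu, hu2⟩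
          rw [← hDeq] at hmem
          exact (Finset.mem_inter.mp hmem).2
        refine le_antisymm ?_ ?_
        · exact canonical M hstep hj (mem_Dset.mp hu2) (hTagree u hu)
        · exact canonical M hstep hi (mem_Dset.mp hui) (hTagree u hu).symm
      · have hui : u ∉ Dset π (i + 1) := fun hc => hu2 (Dset_mono (by omega) hc)
        have e1 : π (i + 1) u = π 0 u :=
          no_switch_eq (i + 1) fun r hr => by
            by_contra hne
            exact hui (mem_Dset.mpr ⟨r, hr, hne⟩)
        have e2 : π (j + 1) u = π 0 u :=
          no_switch_eq (j + 1) fun r hr => by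
            by_contra hne
            exact hu2 (mem_Dset.mpr ⟨r, hr, hne⟩)
        rw [e1, e2]
    -- values of the two policies agree on E
    have hVeq : M.V (π (j + 1)) (sw j) = M.V (π (i + 1)) (sw j) :=
      V_congr M (π (j + 1)) (π (i + 1)) E
        (fun x hx => (hTagree x hx).symm) (fun x hx => (hRagree x hx).symm)
        (fun x hx => pcset_closed M (π (j + 1)) (sw j) hx)
        (start_mem_pcset M (π (j + 1)) (sw j))
    -- contradiction with strict improvement at sw j
    have hVle : M.V (π (i + 1)) (sw j) ≤ M.V (π j) (sw j) :=
      V_mono_chain M hchain j (by omega) (i + 1) (by omega) (sw j)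
    have hlt : M.V (π j) (sw j) < M.Q (π j) (sw j) (π (j + 1) (sw j)) :=
      ((hstep j hj).2 (sw j) (hswp j hj)).1
    have hqv : M.Q (π j) (sw j) (π (j + 1) (sw j)) ≤ M.V (π (j + 1)) (sw j) :=
      Q_le M (π j) (π (j + 1)) (hchain j hj).1 (sw j)
    linarith
  -- membership of charges
  have hmem : ∀ i, i + 1 < ℓ → Φ i ∈ PCs ×ˢ Finset.Icc 1 n := by
    intro i hi
    rw [Finset.mem_product]
    constructor
    · exact hgood _ _
    · rw [Finset.mem_Icc]
      constructor
      · refine Finset.card_pos.mpr ⟨sw i, Finset.mem_inter.mpr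
          ⟨start_mem_pcset M _ _, mem_Dset.mpr ⟨i, by omega, hswp i hi⟩⟩⟩
      · exact le_trans (Finset.card_le_card (Finset.subset_univ (pcset M (π (i + 1)) (sw i) ∩ Dset π (i + 1))))
          (by rw [Finset.card_univ, hn])
  -- injectivity on range (ℓ - 1)
  have hinj : Set.InjOn Φ ↑(Finset.range (ℓ - 1)) := by
    intro a ha b hb hab
    simp only [Finset.coe_range, Set.mem_Iio] at ha hb
    rcases lt_trichotomy a b with h | h | h
    · exact absurd hab (main a b h (by omega))
    · exact h
    · exact absurd hab.symm (main b a h (by omega))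
  have hcard1 : ℓ - 1 ≤ PCs.card * n := by
    have h := Finset.card_le_card_of_injOn Φ
      (fun a ha => hmem a (by have := Finset.mem_range.mp ha; omega)) hinj
    rwa [Finset.card_range, Finset.card_product, Nat.card_Icc, Nat.add_sub_cancel] at h
  -- conclude
  have h5 : PCs.card * n ≤ pathCycleCount (fun s s' : S => min (M.digraph s s') 1) * n :=
    Nat.mul_le_mul hcount le_rfl
  have h6 : ℓ ≤ pathCycleCount (fun s s' : S => min (M.digraph s s') 1) * n +
      pathCycleCount (fun s s' : S => min (M.digraph s s') 1) := by omega
  calc ℓ ≤ _ := h6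
    _ = (n + 1) * pathCycleCount (fun s s' : S => min (M.digraph s s') 1) := by ring
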